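/- arXiv:math/9811041 — 3 statements merged into one kernel-verified Lean document; each statement's English description precedes it below -/
import Mathlib

section
/- For positive integers l ≤ n with n ≥ 2, the sum over all l-compositions p of n of 1/(L(p)·R(p)) equals (1/n²) · e_{l−1}( 1/q_1, 1/q_2, …, 1/q_{n−1} ), where q_i = i(n−i) and e_{l−1} is the (l−1)-st elementary symmetric polynomial evaluated at the n−1 listed rational numbers. -/
open Finset MvPolynomial

/-- Product of left partial sums of a list of parts (as a rational number). -/
noncomputable def Lval (p : List ℕ) : ℚ :=
  ∏ j ∈ Finset.range p.length, (((p.take (j + 1)).sum : ℕ) : ℚ)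

/-- Product of right partial sums. -/
noncomputable def Rval (p : List ℕ) : ℚ := Lval p.reverse

/-- `S k l n`: the sum over all `l`-compositions `p` of `n` of `e_k(p)/(L(p)R(p))`. -/
noncomputable def Sval (k l n : ℕ) : ℚ :=
  ∑ c ∈ Finset.univ.filter (fun c : Composition n => c.length = l),
    ((c.blocks.map (fun i : ℕ => (i : ℚ)) : Multiset ℚ).esymm k) /
      (Lval c.blocks * Rval c.blocks)

/-- The generating polynomial `P_n(u,v)` in `ℚ[u,v]`, with `X 0 = u`, `X 1 = v`. -/
noncomputable def Pgen (n : ℕ) : MvPolynomial (Fin 2) ℚ :=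
  ∑ l ∈ Finset.Icc 1 n, ∑ k ∈ Finset.range (l + 1),
    C (Sval k l n) * X 0 ^ k * X 1 ^ (l - k)

/-!
A composition of `n` into `l` parts is determined by its `l - 1` interior partial sums
`s₁ < ⋯ < s_{l-1}`, and these form an arbitrary `(l - 1)`-subset of `{1, …, n - 1}`.
The left partial sums are `s₁, …, s_{l-1}, n` and the right ones are `n - s_{l-1}, …, n - s₁, n`,
so `L(p) R(p) = n² ∏ⱼ sⱼ (n - sⱼ)`. Summing `1 / (L(p) R(p))` over compositions is therefore
summing `n⁻² ∏_{s ∈ S} 1 / q_s` over `(l - 1)`-subsets `S`, which is `n⁻² e_{l-1}(1/q)`.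
-/

theorem Rval_eq_prod_drop (p : List ℕ) :
    Rval p = ∏ j ∈ range p.length, (((p.drop j).sum : ℕ) : ℚ) := by
  rw [Rval, Lval, List.length_reverse, ← prod_range_reflect]
  refine prod_congr rfl fun j hj => ?_
  rw [List.take_reverse, List.sum_reverse]
  have := mem_range.1 hj
  congr 4
  omega

namespace Composition

variable {n : ℕ} (c : Composition n)

theorem sizeUpTo_lt_sizeUpTo {i j : ℕ} (hij : i < j) (hj : j ≤ c.length) :
    c.sizeUpTo i < c.sizeUpTo j :=
  c.boundary.strictMono (show (⟨i, by omega⟩ : Fin (c.length + 1)) < ⟨j, by omega⟩ from hij)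

theorem sum_drop_blocks (j : ℕ) : ((c.blocks.drop j).sum : ℚ) = n - c.sizeUpTo j := by
  rw [eq_sub_iff_add_eq, ← Nat.cast_add, add_comm, sizeUpTo, List.sum_take_add_sum_drop,
    blocks_sum]

def innerBoundaries : Finset ℕ :=
  (range (c.length - 1)).image fun j => c.sizeUpTo (j + 1)

theorem injOn_sizeUpTo_succ :
    Set.InjOn (fun j => c.sizeUpTo (j + 1)) (range (c.length - 1)) := by
  refine StrictMonoOn.injOn fun i _ j hj hij => c.sizeUpTo_lt_sizeUpTo (by omega) ?_
  simp only [coe_range, Set.mem_Iio] at hj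
  omega

theorem card_innerBoundaries : c.innerBoundaries.card = c.length - 1 := by
  rw [innerBoundaries, card_image_of_injOn c.injOn_sizeUpTo_succ, card_range]

theorem innerBoundaries_subset_Icc : c.innerBoundaries ⊆ Icc 1 (n - 1) := by
  intro b hb
  obtain ⟨j, hj, rfl⟩ := mem_image.1 hb
  rw [mem_range] at hj
  have h0 := c.sizeUpTo_lt_sizeUpTo (i := 0) (j := j + 1) (by omega) (by omega)
  have hn := c.sizeUpTo_lt_sizeUpTo (i := j + 1) (j := c.length) (by omega) le_rfl
  rw [c.sizeUpTo_zero] at h0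
  rw [c.sizeUpTo_length] at hn
  exact mem_Icc.2 ⟨h0, by omega⟩

theorem map_val_boundaries :
    c.boundaries.map Fin.valEmbedding = insert 0 (insert n c.innerBoundaries) := by
  ext b
  simp only [boundaries, map_map, mem_map, mem_univ, true_and, mem_insert, innerBoundaries,
    mem_image, mem_range]
  constructor
  · rintro ⟨⟨i, hi⟩, rfl⟩
    change c.sizeUpTo i = 0 ∨ c.sizeUpTo i = n ∨
      ∃ a < c.length - 1, c.sizeUpTo (a + 1) = c.sizeUpTo i
    rcases Nat.eq_zero_or_pos i with rfl | hpos
    · exact Or.inl c.sizeUpTo_zero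
    rcases eq_or_lt_of_le (Nat.lt_succ_iff.1 hi) with rfl | hlt
    · exact Or.inr (Or.inl c.sizeUpTo_length)
    · exact Or.inr (Or.inr ⟨i - 1, by omega, by rw [Nat.sub_add_cancel hpos]⟩)
  · rintro (rfl | rfl | ⟨a, ha, rfl⟩)
    exacts [⟨0, c.sizeUpTo_zero⟩, ⟨Fin.last _, c.sizeUpTo_length⟩, ⟨⟨a + 1, by omega⟩, rfl⟩]

theorem innerBoundaries_injective :
    Function.Injective (innerBoundaries : Composition n → Finset ℕ) := by
  intro c d h
  apply (compositionEquiv n).injective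
  ext1
  apply map_injective Fin.valEmbedding
  exact c.map_val_boundaries.trans (h ▸ d.map_val_boundaries.symm)

theorem exists_innerBoundaries_eq {t : Finset ℕ} (ht : t ⊆ Icc 1 (n - 1)) :
    ∃ c : Composition n, c.innerBoundaries = t := by
  let d : CompositionAsSet n :=
    ⟨univ.filter fun i => (i : ℕ) ∈ insert 0 (insert n t), by simp, by simp⟩
  refine ⟨d.toComposition, ?_⟩
  have hd : d.boundaries.map Fin.valEmbedding = insert 0 (insert n t) := by
    ext b
    simp only [d, mem_map, mem_filter, mem_univ, true_and, Fin.valEmbedding_apply]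
    constructor
    · rintro ⟨a, ha, rfl⟩
      exact ha
    · intro hb
      refine ⟨⟨b, ?_⟩, hb, rfl⟩
      rcases mem_insert.1 hb with rfl | hb
      · omega
      rcases mem_insert.1 hb with rfl | hb
      · omega
      have := mem_Icc.1 (ht hb)
      omega
  have key := d.toComposition.map_val_boundaries
  rw [CompositionAsSet.toComposition_boundaries, hd] at key
  -- `0` and `n` lie in neither set, so the two inserts can be cancelled
  ext b
  have hb := congrArg (b ∈ ·) key
  have h1 := @ht b
  have h2 := d.toComposition.innerBoundaries_subset_Icc (x := b)
  simp only [mem_insert, mem_Icc] at hb h1 h2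
  grind

theorem image_innerBoundaries_filter_length {l : ℕ} (hn : 0 < n) (hl : 1 ≤ l) :
    (univ.filter fun c : Composition n => c.length = l).image innerBoundaries =
      powersetCard (l - 1) (Icc 1 (n - 1)) := by
  ext t
  simp only [mem_image, mem_filter, mem_univ, true_and, mem_powersetCard]
  constructor
  · rintro ⟨c, rfl, rfl⟩
    exact ⟨c.innerBoundaries_subset_Icc, c.card_innerBoundaries⟩
  · rintro ⟨ht, hcard⟩
    obtain ⟨c, rfl⟩ := exists_innerBoundaries_eq ht
    have := c.length_pos_of_pos hn
    rw [card_innerBoundaries] at hcard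
    exact ⟨c, by omega, rfl⟩

theorem Lval_mul_Rval_blocks (hn : 0 < n) :
    Lval c.blocks * Rval c.blocks =
      n ^ 2 * ∏ b ∈ c.innerBoundaries, ((b : ℚ) * (n - b)) := by
  obtain ⟨m, hm⟩ : ∃ m, c.length = m + 1 := Nat.exists_eq_add_one.2 (c.length_pos_of_pos hn)
  have hL : Lval c.blocks = ∏ j ∈ range c.length, (c.sizeUpTo (j + 1) : ℚ) := by
    rw [Lval, blocks_length]
    rfl
  rw [innerBoundaries, prod_image c.injOn_sizeUpTo_succ, hL, Rval_eq_prod_drop, blocks_length, hm,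
    prod_range_succ, prod_range_succ']
  simp only [sum_drop_blocks, ← hm, sizeUpTo_length, sizeUpTo_zero, prod_mul_distrib]
  simp only [hm, Nat.add_sub_cancel]
  push_cast
  ring

end Composition

theorem composition_sum_reciprocal_general (n : ℕ) (hn : 2 ≤ n) (l : ℕ) (hl : 1 ≤ l)
    (q : ℕ → ℚ) (hq : ∀ i, q i = (i : ℚ) * ((n : ℚ) - i)) :
    (∑ c ∈ Finset.univ.filter (fun c : Composition n => c.length = l),
        1 / (Lval c.blocks * Rval c.blocks)) =
      (1 / (n : ℚ) ^ 2) *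
        ((Finset.Icc 1 (n - 1)).val.map (fun i : ℕ => 1 / q i)).esymm (l - 1) := by
  have hpos : 0 < n := by omega
  rw [Finset.esymm_map_val, mul_sum, ← Composition.image_innerBoundaries_filter_length hpos hl,
    sum_image fun c _ d _ h => Composition.innerBoundaries_injective h]
  refine sum_congr rfl fun c _ => ?_
  simp only [c.Lval_mul_Rval_blocks hpos, hq, one_div, mul_inv, prod_mul_distrib, prod_inv_distrib]

/-- `∑ 1/(L(p)R(p)) = (1/n²) · e_{l-1}(1/q₁, …, 1/q_{n-1})`, the sum over all
`l`-compositions of `n`, where `q_i = i(n-i)`. -/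
theorem composition_sum_reciprocal (n : ℕ) (hn : 2 ≤ n) (l : ℕ) (hl : 1 ≤ l) (hln : l ≤ n)
    (q : ℕ → ℚ) (hq : ∀ i, q i = (i : ℚ) * ((n : ℚ) - i)) :
    (∑ c ∈ Finset.univ.filter (fun c : Composition n => c.length = l),
        1 / (Lval c.blocks * Rval c.blocks)) =
      (1 / (n : ℚ) ^ 2) *
        ((Finset.Icc 1 (n - 1)).val.map (fun i : ℕ => 1 / q i)).esymm (l - 1) :=
  composition_sum_reciprocal_general n hn l hl q hq
end

section
/- Let K = ℚ(α,β,γ) and set û = ¼(α+β+γ)(2−α−β−γ) and v̂ = ¼(α−β−γ)(α−β+γ) in K. Let s = (α+β+γ)/2, let B ∈ K[[z]] be the binomial series for (1−z)^s, i.e. B = Σ_{n≥0} (−1)^n (s(s−1)⋯(s−n+1)/n!) z^n, and let F ∈ K[[z]] be the hypergeometric series F = Σ_{n≥0} ((α)_n (β)_n)/(n! (1−γ)_n) z^n, where (x)_n = x(x+1)⋯(x+n−1) is the rising factorial (with (x)_0 = 1). Then the product g = B·F has constant term 1 and satisfies the formal differential equation (1−z)² z² g'' + (1−γ) z (1−z)²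 g' + ( v̂ z(1−z) + û z ) g = 0; equivalently, the coefficients g_n of g satisfy g_0 = 1 and n(γ−n) g_n = Σ_{i=0}^{n−1} ((n−i)û + v̂) g_i for all n ≥ 1. -/
/-!
With θ = X·d/dX, the binomial series satisfies (1 - X)·θB = -s·X·B and the hypergeometric
series satisfies θ(θ + c - 1)F = X(θ + a)(θ + b)F with c = 1 - γ. Expanding θ(θ + c - 1)(BF) by
Leibniz and clearing denominators with (1 - X)², the cross terms θB·θF cancel precisely because
a + b + 1 - c = α + β + γ = 2s, which leaves the stated equation. Multiplying it by
(1 - X)⁻² = ∑ (k + 1) Xᵏ turns it into the coefficient recurrence, since θ acts on Xⁿ as n.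
-/

open Finset PowerSeries

/-- The field `K = ℚ(α,β,γ)`, realized as the fraction field of `ℚ[α,β,γ]`. -/
noncomputable abbrev Kabc : Type := FractionRing (MvPolynomial (Fin 3) ℚ)

theorem MvPolynomial.algebraMap_X_ne_natCast {σ k : Type*} [CommRing k] [CharZero k] (i : σ)
    {n : ℕ} (hn : n ≠ 0) :
    algebraMap (MvPolynomial σ k) (FractionRing (MvPolynomial σ k)) (X i) ≠ n := by
  intro h
  rw [← map_natCast (algebraMap (MvPolynomial σ k) _)] at h
  have := congrArg (eval 0) (IsFractionRing.injective _ _ h)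
  simp only [eval_X, Pi.zero_apply, map_natCast] at this
  exact hn (by exact_mod_cast this.symm)

namespace PowerSeries

section Euler

variable (R : Type*) [CommRing R]

noncomputable def eulerDeriv : Derivation R R⟦X⟧ R⟦X⟧ := (X : R⟦X⟧) • d⁄dX R

variable {R}

theorem eulerDeriv_apply (f : R⟦X⟧) : eulerDeriv R f = X * d⁄dX R f := rfl

theorem coeff_eulerDeriv (f : R⟦X⟧) (n : ℕ) :
    coeff n (eulerDeriv R f) = n * coeff n f := by
  cases n with
  | zero => simp [eulerDeriv_apply]
  | succ n => rw [eulerDeriv_apply, coeff_succ_X_mul, coeff_derivative]; push_cast; ring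

theorem eulerDeriv_X : eulerDeriv R X = X := by simp [eulerDeriv_apply]

theorem eulerDeriv_C (r : R) : eulerDeriv R (C r) = 0 := by simp [eulerDeriv_apply]

theorem eulerDeriv_eulerDeriv (f : R⟦X⟧) :
    eulerDeriv R (eulerDeriv R f) = X * d⁄dX R f + X ^ 2 * d⁄dX R (d⁄dX R f) := by
  simp only [eulerDeriv_apply, Derivation.leibniz, derivative_X, smul_eq_mul]
  ring

end Euler

section Series

variable {K : Type*} [Field K] [CharZero K]

noncomputable def oneSubXPow (s : K) : K⟦X⟧ :=
  mk fun n => (-1) ^ n * (∏ j ∈ range n, (s - (j : K))) / (n.factorial : K)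

noncomputable def hypergeometric (a b c : K) : K⟦X⟧ :=
  mk fun n => ((∏ j ∈ range n, (a + (j : K))) * ∏ j ∈ range n, (b + (j : K))) /
    ((n.factorial : K) * ∏ j ∈ range n, (c + (j : K)))

theorem coeff_succ_oneSubXPow (s : K) (n : ℕ) :
    coeff (n + 1) (oneSubXPow s) * (n + 1) = (n - s) * coeff n (oneSubXPow s) := by
  have hn : (n + 1 : K) ≠ 0 := n.cast_add_one_ne_zero
  simp only [oneSubXPow, coeff_mk, prod_range_succ, Nat.factorial_succ]
  push_cast
  field_simp
  ring

theorem coeff_succ_hypergeometric (a b : K) {c : K} (hc : ∀ n : ℕ, c + n ≠ 0) (n : ℕ) :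
    coeff (n + 1) (hypergeometric a b c) * ((n + 1) * (c + n)) =
      (a + n) * (b + n) * coeff n (hypergeometric a b c) := by
  have hn : (n + 1 : K) ≠ 0 := n.cast_add_one_ne_zero
  have hprod : ∏ j ∈ range n, (c + (j : K)) ≠ 0 := prod_ne_zero_iff.mpr fun j _ ↦ hc j
  have := hc n
  simp only [hypergeometric, coeff_mk, prod_range_succ, Nat.factorial_succ]
  push_cast
  field_simp

theorem eulerDeriv_oneSubXPow (s : K) :
    eulerDeriv K (oneSubXPow s) = X * (eulerDeriv K (oneSubXPow s) - C s * oneSubXPow s) := by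
  ext (_ | n)
  · simp [coeff_eulerDeriv]
  · rw [coeff_succ_X_mul, map_sub, coeff_eulerDeriv, coeff_eulerDeriv, coeff_C_mul]
    push_cast
    linear_combination coeff_succ_oneSubXPow s n

theorem hypergeometric_ode (a b : K) {c : K} (hc : ∀ n : ℕ, c + n ≠ 0) :
    eulerDeriv K (eulerDeriv K (hypergeometric a b c))
        + C (c - 1) * eulerDeriv K (hypergeometric a b c) =
      X * (eulerDeriv K (eulerDeriv K (hypergeometric a b c))
        + C (a + b) * eulerDeriv K (hypergeometric a b c) + C (a * b) * hypergeometric a b c) := by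
  ext (_ | n)
  · simp only [coeff_zero_X_mul, map_add (coeff _), coeff_C_mul, coeff_eulerDeriv]
    simp
  · simp only [coeff_succ_X_mul, map_add (coeff _), coeff_eulerDeriv, coeff_C_mul]
    push_cast
    linear_combination coeff_succ_hypergeometric a b hc n

end Series

section Ode

variable {R : Type*} [CommRing R]

theorem ode_mul_of_binomial_ode_of_hypergeometric_ode {B F : R⟦X⟧} {a b c s : R}
    (hB : eulerDeriv R B = X * (eulerDeriv R B - C s * B))
    (hF : eulerDeriv R (eulerDeriv R F) + C (c - 1) * eulerDeriv R F =
      X * (eulerDeriv R (eulerDeriv R F) + C (a + b) * eulerDeriv R F + C (a * b) * F))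
    (hs : a + b + 1 - c = 2 * s) :
    (1 - X) ^ 2 * (eulerDeriv R (eulerDeriv R (B * F)) + C (c - 1) * eulerDeriv R (B * F))
      + X * (C (s ^ 2 + s * (c - 1) - a * b) * (1 - X) + C (s - s ^ 2)) * (B * F) = 0 := by
  have hB' := congrArg (eulerDeriv R) hB
  simp only [Derivation.leibniz, map_sub, eulerDeriv_X, eulerDeriv_C, smul_eq_mul] at hB'
  have hs' := congrArg C hs
  simp only [Derivation.leibniz, smul_eq_mul, map_add, map_sub, map_mul, map_pow, map_one,
    map_ofNat] at hB hB' hF hs' ⊢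
  linear_combination (1 - X) * B * hF + (1 - X) * F * hB'
    + ((C c - 1) * (1 - X) * F + 2 * (1 - X) * eulerDeriv R F + (1 - C s) * X * F) * hB
    + (1 - X) * X * B * eulerDeriv R F * hs'

theorem coeff_eq_neg_sum_of_one_sub_X_sq_mul_add_eq_zero {f g : R⟦X⟧} {u v : R}
    (h : (1 - X) ^ 2 * f + X * (C v * (1 - X) + C u) * g = 0) {n : ℕ} (hn : 1 ≤ n) :
    coeff n f = -∑ i ∈ range n, (((n : R) - i) * u + v) * coeff i g := by
  -- `mk 1 = (1 - X)⁻¹`, so `V = v / (1 - X) + u / (1 - X) ^ 2` and `V_j = v + (j + 1) u`.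
  set V : R⟦X⟧ := C v * mk 1 + C u * mk 1 ^ 2
  have hf : f = -(X * (g * V)) := by
    linear_combination (mk 1) ^ 2 * h - (mk 1 * (1 - X) + 1) * f * mk_one_mul_one_sub_eq_one R
      - X * C v * g * mk 1 * mk_one_mul_one_sub_eq_one R
  have hV (j : ℕ) : coeff j V = v + (j + 1) * u := by
    simp only [V, map_add, coeff_C_mul, mk_one_pow_eq_mk_choose_add R 1, coeff_mk]
    simp [add_comm 1, mul_comm u]
  obtain ⟨m, rfl⟩ := Nat.exists_eq_add_of_le' hn
  rw [hf, map_neg, coeff_succ_X_mul, coeff_mul, Nat.sum_antidiagonal_eq_sum_range_succ_mk]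
  congr 1
  refine sum_congr rfl fun i hi ↦ ?_
  rw [hV, Nat.cast_sub (mem_range_succ_iff.mp hi)]
  push_cast
  ring

end Ode

end PowerSeries

theorem binomial_mul_hypergeometric_solves_ode_general
    (α β γ : Kabc)
    (hγ : γ = algebraMap (MvPolynomial (Fin 3) ℚ) Kabc (MvPolynomial.X 2))
    (uh vh s : Kabc)
    (huh : uh = (1 / 4 : Kabc) * (α + β + γ) * (2 - α - β - γ))
    (hvh : vh = (1 / 4 : Kabc) * (α - β - γ) * (α - β + γ))
    (hs : s = (α + β + γ) / 2)
    (B F g : PowerSeries Kabc)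
    (hB : B = PowerSeries.mk fun n =>
      (-1) ^ n * (∏ j ∈ Finset.range n, (s - (j : Kabc))) / (n.factorial : Kabc))
    (hF : F = PowerSeries.mk fun n =>
      ((∏ j ∈ Finset.range n, (α + (j : Kabc))) * ∏ j ∈ Finset.range n, (β + (j : Kabc))) /
        ((n.factorial : Kabc) * ∏ j ∈ Finset.range n, (1 - γ + (j : Kabc))))
    (hg : g = B * F) :
    PowerSeries.constantCoeff g = 1 ∧
    ((1 - PowerSeries.X) ^ 2 * PowerSeries.X ^ 2 * (d⁄dX Kabc (d⁄dX Kabc g))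
        + PowerSeries.C (1 - γ) * PowerSeries.X * (1 - PowerSeries.X) ^ 2 * (d⁄dX Kabc g)
        + (PowerSeries.C vh * PowerSeries.X * (1 - PowerSeries.X)
            + PowerSeries.C uh * PowerSeries.X) * g = 0) ∧
    (∀ n : ℕ, 1 ≤ n →
      (n : Kabc) * (γ - n) * PowerSeries.coeff n g =
        ∑ i ∈ Finset.range n, (((n : Kabc) - (i : Kabc)) * uh + vh) * PowerSeries.coeff i g) := by
  obtain rfl : B = oneSubXPow s := hB
  obtain rfl : F = hypergeometric α β (1 - γ) := hF
  subst hg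
  have hc (n : ℕ) : 1 - γ + n ≠ 0 := fun h ↦
    MvPolynomial.algebraMap_X_ne_natCast (k := ℚ) (2 : Fin 3) n.succ_ne_zero <| by
      rw [← hγ]; push_cast; linear_combination -h
  have hu : uh = s - s ^ 2 := by rw [huh, hs]; ring
  have hv : vh = s ^ 2 + s * (1 - γ - 1) - α * β := by rw [hvh, hs]; ring
  have hode := ode_mul_of_binomial_ode_of_hypergeometric_ode (eulerDeriv_oneSubXPow s) (hypergeometric_ode α β hc)
    (by rw [hs]; ring)
  rw [← hu, ← hv] at hode
  refine ⟨by simp [oneSubXPow, hypergeometric], ?_, fun n hn ↦ ?_⟩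
  · rw [eulerDeriv_eulerDeriv, eulerDeriv_apply] at hode
    simp only [map_sub, map_one] at hode ⊢
    linear_combination hode
  · rw [← neg_eq_iff_eq_neg.mpr (coeff_eq_neg_sum_of_one_sub_X_sq_mul_add_eq_zero hode hn)]
    simp only [map_add (coeff _), coeff_C_mul, coeff_eulerDeriv]
    ring

/-- Proposition 3: with `û = ¼(α+β+γ)(2-α-β-γ)`, `v̂ = ¼(α-β-γ)(α-β+γ)` and
`s = (α+β+γ)/2`, the product `g = B·F` of the binomial series
`B = (1-z)^s = ∑ (-1)ⁿ (s(s-1)⋯(s-n+1)/n!) zⁿ` with the hypergeometric series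
`F = F(α,β,1-γ;z) = ∑ ((α)_n (β)_n)/(n! (1-γ)_n) zⁿ` has constant term `1`, satisfies
`(1-z)² z² g'' + (1-γ) z (1-z)² g' + (v̂ z(1-z) + û z) g = 0`, and equivalently its
coefficients satisfy `n(γ-n) g_n = ∑_{i=0}^{n-1} ((n-i)û + v̂) g_i` for all `n ≥ 1`. -/
theorem binomial_mul_hypergeometric_solves_ode
    (α β γ : Kabc)
    (hα : α = algebraMap (MvPolynomial (Fin 3) ℚ) Kabc (MvPolynomial.X 0))
    (hβ : β = algebraMap (MvPolynomial (Fin 3) ℚ) Kabc (MvPolynomial.X 1))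
    (hγ : γ = algebraMap (MvPolynomial (Fin 3) ℚ) Kabc (MvPolynomial.X 2))
    (uh vh s : Kabc)
    (huh : uh = (1 / 4 : Kabc) * (α + β + γ) * (2 - α - β - γ))
    (hvh : vh = (1 / 4 : Kabc) * (α - β - γ) * (α - β + γ))
    (hs : s = (α + β + γ) / 2)
    (B F g : PowerSeries Kabc)
    (hB : B = PowerSeries.mk fun n =>
      (-1) ^ n * (∏ j ∈ Finset.range n, (s - (j : Kabc))) / (n.factorial : Kabc))
    (hF : F = PowerSeries.mk fun n =>
      ((∏ j ∈ Finset.range n, (α + (j : Kabc))) * ∏ j ∈ Finset.range n, (β + (j : Kabc))) /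
        ((n.factorial : Kabc) * ∏ j ∈ Finset.range n, (1 - γ + (j : Kabc))))
    (hg : g = B * F) :
    PowerSeries.constantCoeff g = 1 ∧
    ((1 - PowerSeries.X) ^ 2 * PowerSeries.X ^ 2 * (d⁄dX Kabc (d⁄dX Kabc g))
        + PowerSeries.C (1 - γ) * PowerSeries.X * (1 - PowerSeries.X) ^ 2 * (d⁄dX Kabc g)
        + (PowerSeries.C vh * PowerSeries.X * (1 - PowerSeries.X)
            + PowerSeries.C uh * PowerSeries.X) * g = 0) ∧
    (∀ n : ℕ, 1 ≤ n →
      (n : Kabc) * (γ - n) * PowerSeries.coeff n g =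
        ∑ i ∈ Finset.range n, (((n : Kabc) - (i : Kabc)) * uh + vh) * PowerSeries.coeff i g) :=
  binomial_mul_hypergeometric_solves_ode_general α β γ hγ uh vh s huh hvh hs B F g hB hF hg
end

section
/- Fix n ≥ 1 and set û_n = ¼(α+β+n)(2−α−β−n) and v̂_n = ¼(α−β−n)(α−β+n), polynomials in ℚ[α,β]. Then in ℚ[α,β] one has P_n(û_n, v̂_n) = (−1)^n (α)_n (β)_n / (n!)², where (x)_n = x(x+1)⋯(x+n−1) is the rising factorial. -/
open Finset MvPolynomial

noncomputable section
local notation "AA" => MvPolynomial (Fin 2) ℚ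
def UhP (n : ℕ) : AA := C (1 / 4 : ℚ) * (X 0 + X 1 + (n : AA)) * (2 - X 0 - X 1 - (n : AA))
def VhP (n : ℕ) : AA := C (1 / 4 : ℚ) * (X 0 - X 1 - (n : AA)) * (X 0 - X 1 + (n : AA))
def sigP (n : ℕ) : AA := X 0 + X 1 + (n : AA)
def U4 (n : ℕ) : AA := sigP n * (2 - sigP n)
def V4 (n : ℕ) : AA := (X 0 - X 1 - (n : AA)) * (X 0 - X 1 + (n : AA))

def dP (n : ℕ) : ℕ → AA
  | 0 => 1
  | k + 1 => C ((2 * (k : ℚ) + 2)⁻¹) * (2 * (k : AA) - sigP n) * dP n k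

def gP (n : ℕ) : ℕ → AA
  | 0 => 1
  | m + 1 => C ((((m : ℚ) + 1) * (((m : ℚ) + 1) - (n : ℚ)))⁻¹) *
      ((X 0 + (m : AA)) * (X 1 + (m : AA))) * gP n m

def cfP (n m : ℕ) : AA := ∑ i ∈ range (m + 1), gP n i * dP n (m - i)

def FcP (n S : ℕ) : AA :=
  ∑ t ∈ range S, cfP n t * (VhP n + ((S : AA) - (t : AA)) * UhP n)

def P4 (n s : ℕ) : AA := 8 * ((s : AA) + 1) * ((n : AA) - (s : AA) - 1) + V4 n + U4 n
def Q4 (n s : ℕ) : AA := 4 * (s : AA) * ((n : AA) - (s : AA)) + V4 n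

lemma natCast_C (j : ℕ) : ((j : ℕ) : AA) = C ((j : ℚ)) := by
  simp

lemma h14 : (4 : AA) * C (1 / 4 : ℚ) = 1 := by
  have : (4 : AA) = C (4 : ℚ) := by simp [map_ofNat]
  rw [this, ← C_mul]; norm_num

lemma hV4 (n : ℕ) : (4 : AA) * VhP n = V4 n := by
  rw [VhP, V4]
  linear_combination ((X 0 - X 1 - (n:AA)) * (X 0 - X 1 + (n:AA))) * h14

lemma hU4 (n : ℕ) : (4 : AA) * UhP n = U4 n := by
  rw [UhP, U4, sigP]
  linear_combination ((X 0 + X 1 + (n:AA)) * (2 - X 0 - X 1 - (n:AA))) * h14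

lemma hd (n k : ℕ) : (2 * (k : AA) + 2) * dP n (k + 1) = (2 * (k : AA) - sigP n) * dP n k := by
  rw [dP, ← mul_assoc, ← mul_assoc]
  have h1 : (2 * (k : AA) + 2) = C (2 * (k : ℚ) + 2) := by
    simp only [map_add, map_mul, map_ofNat, map_natCast]
  rw [h1, ← C_mul, mul_inv_cancel₀ (by positivity), map_one, one_mul]

lemma hg (n m : ℕ) (h : m + 1 < n) :
    (((m : AA) + 1) * ((n : AA) - (m : AA) - 1)) * gP n (m + 1) =
      -((X 0 + (m : AA)) * (X 1 + (m : AA))) * gP n m := by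
  rw [gP, ← mul_assoc, ← mul_assoc]
  have h1 : ((m : AA) + 1) * ((n : AA) - (m : AA) - 1) =
      C (((m : ℚ) + 1) * ((n : ℚ) - (m : ℚ) - 1)) := by
    simp only [map_add, map_mul, map_sub, map_one, map_ofNat, map_natCast]
  have h2 : (((m : ℚ) + 1) * ((n : ℚ) - (m : ℚ) - 1)) *
      ((((m : ℚ) + 1) * (((m : ℚ) + 1) - (n : ℚ)))⁻¹) = -1 := by
    have hm : ((m : ℚ) + 1) ≠ 0 := by positivity
    have hn : (n : ℚ) - (m : ℚ) - 1 ≠ 0 := by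
      have : (m : ℚ) + 1 < (n : ℚ) := by exact_mod_cast h
      intro hcon; nlinarith
    have e : ((m : ℚ) + 1) * (((m : ℚ) + 1) - (n : ℚ)) =
        -((((m : ℚ) + 1)) * ((n : ℚ) - (m : ℚ) - 1)) := by ring
    rw [e, inv_neg, mul_neg, mul_inv_cancel₀ (mul_ne_zero hm hn)]
  rw [h1, ← C_mul, h2, map_neg, map_one]
  ring



lemma PT (n m k : ℕ) (h : m + 1 < n) :
    4 * ((m : AA) + (k : AA) + 2) * ((n : AA) - (m : AA) - (k : AA) - 2) *
        (gP n m * dP n (k + 2))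
      - P4 n (m + k) * (gP n m * dP n (k + 1))
      + Q4 n (m + k) * (gP n m * dP n k)
    = 4 * (((m : AA) + 1) * ((n : AA) - (m : AA) - 1)) * gP n (m + 1) *
        (dP n k - dP n (k + 1))
      - 4 * ((m : AA) * ((n : AA) - (m : AA))) * gP n m * (dP n (k + 1) - dP n (k + 2)) := by
  have h1 := hd n k
  have h2 := hd n (k + 1)
  push_cast at h2
  have hgm := hg n m h
  rw [P4, Q4, V4, U4, sigP] at *
  push_cast
  linear_combination
    (2 * ((n : AA) - (k : AA) - 2 * (m : AA) - 2) * gP n m) * h2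
    + ((2 * (k : AA) + 4 * (m : AA) + (X 0 + X 1 + (n : AA)) - 2 * (n : AA)) * gP n m) * h1
    + (4 * (dP n (k + 1) - dP n k)) * hgm

lemma cf_expand2 (n s : ℕ) :
    cfP n (s + 2) = (∑ m ∈ range (s + 1), gP n m * dP n (s + 2 - m))
      + gP n (s + 1) * dP n 1 + gP n (s + 2) * dP n 0 := by
  rw [cfP, show s + 2 + 1 = (s + 1) + 1 + 1 by ring, Finset.sum_range_succ,
    Finset.sum_range_succ, show s + 2 - (s + 1) = 1 by omega, Nat.sub_self]

lemma cf_expand1 (n s : ℕ) :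
    cfP n (s + 1) = (∑ m ∈ range (s + 1), gP n m * dP n (s + 1 - m)) + gP n (s + 1) * dP n 0 := by
  rw [cfP, Finset.sum_range_succ, Nat.sub_self]

lemma T0 (n s : ℕ) (h : s + 1 < n) :
    4 * ((s : AA) + 2) * ((n : AA) - (s : AA) - 2) * cfP n (s + 2)
      - P4 n s * cfP n (s + 1) + Q4 n s * cfP n s
    = 4 * (((s : AA) + 1) * ((n : AA) - (s : AA) - 1)) * gP n (s + 1) * (dP n 0 - dP n 1)
      + 4 * ((s : AA) + 2) * ((n : AA) - (s : AA) - 2) *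
          (gP n (s + 1) * dP n 1 + gP n (s + 2) * dP n 0)
      - P4 n s * (gP n (s + 1) * dP n 0) := by
  have key : ∀ m ∈ range (s + 1),
      (4 * ((s : AA) + 2) * ((n : AA) - (s : AA) - 2) * (gP n m * dP n (s + 2 - m))
        - P4 n s * (gP n m * dP n (s + 1 - m))
        + Q4 n s * (gP n m * dP n (s - m)))
      = (fun j : ℕ => 4 * ((j : AA) * ((n : AA) - (j : AA))) * gP n j *
            (dP n (s + 1 - j) - dP n (s + 2 - j))) (m + 1)
        - (fun j : ℕ => 4 * ((j : AA) * ((n : AA) - (j : AA))) * gP n j *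
            (dP n (s + 1 - j) - dP n (s + 2 - j))) m := by
    intro m hm
    have hms : m ≤ s := by simpa using Nat.lt_succ_iff.mp (Finset.mem_range.mp hm)
    obtain ⟨k, rfl⟩ : ∃ k, s = m + k := ⟨s - m, by omega⟩
    simp only [show m + k + 2 - m = k + 2 by omega, show m + k + 1 - m = k + 1 by omega,
      show m + k - m = k by omega, show m + k + 1 - (m + 1) = k by omega,
      show m + k + 2 - (m + 1) = k + 1 by omega]
    have hpt := PT n m k (by omega)
    push_cast
    linear_combination hpt
  have hsum : 4 * ((s : AA) + 2) * ((n : AA) - (s : AA) - 2) *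
        (∑ m ∈ range (s + 1), gP n m * dP n (s + 2 - m))
      - P4 n s * (∑ m ∈ range (s + 1), gP n m * dP n (s + 1 - m))
      + Q4 n s * (∑ m ∈ range (s + 1), gP n m * dP n (s - m))
      = 4 * (((s : AA) + 1) * ((n : AA) - (s : AA) - 1)) * gP n (s + 1) * (dP n 0 - dP n 1) := by
    rw [Finset.mul_sum, Finset.mul_sum, Finset.mul_sum, ← Finset.sum_sub_distrib,
      ← Finset.sum_add_distrib, Finset.sum_congr rfl key,
      Finset.sum_range_sub (fun j : ℕ => 4 * ((j : AA) * ((n : AA) - (j : AA))) * gP n j *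
        (dP n (s + 1 - j) - dP n (s + 2 - j)))]
    simp only [Nat.cast_zero, Nat.cast_add, Nat.cast_one, Nat.sub_self,
      show s + 1 - (s + 1) = 0 by omega, show s + 2 - (s + 1) = 1 by omega]
    ring
  rw [cf_expand2, cf_expand1, cfP]
  linear_combination hsum

lemma dP0 (n : ℕ) : dP n 0 = 1 := rfl

lemma hd1 (n : ℕ) : (2 : AA) * dP n 1 = -sigP n := by
  have h := hd n 0
  simpa [dP0] using h

lemma four_ne : (4 : AA) ≠ 0 := by
  have h4 : (4 : AA) = C (4 : ℚ) := by simp [map_ofNat]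
  rw [h4]
  exact C_ne_zero.mpr (by norm_num)

lemma T1 (n s : ℕ) (h : s + 2 < n) :
    4 * ((s : AA) + 2) * ((n : AA) - (s : AA) - 2) * cfP n (s + 2)
      = P4 n s * cfP n (s + 1) - Q4 n s * cfP n s := by
  have t0 := T0 n s (by omega)
  have hgm := hg n (s + 1) h
  push_cast at hgm
  have hd1' := hd1 n
  rw [sigP] at hd1'
  rw [dP0] at t0
  rw [P4, Q4, V4, U4, sigP] at t0 ⊢
  linear_combination t0 + (2 * (((s : AA) + 2) * ((n : AA) - (s : AA) - 2)
      - ((s : AA) + 1) * ((n : AA) - (s : AA) - 1)) * gP n (s + 1)) * hd1'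
    + (4 : AA) * hgm

lemma T2 (s : ℕ) :
    P4 (s + 2) s * cfP (s + 2) (s + 1) - Q4 (s + 2) s * cfP (s + 2) s
      = -(4 : AA) * ((X 0 + ((s : AA) + 1)) * (X 1 + ((s : AA) + 1))) * gP (s + 2) (s + 1) := by
  have t0 := T0 (s + 2) s (by omega)
  push_cast at t0
  have hd1' := hd1 (s + 2)
  rw [sigP] at hd1'
  push_cast at hd1'
  rw [dP0] at t0
  rw [P4, Q4, V4, U4, sigP] at *
  push_cast at *
  linear_combination -t0 + (2 * ((s : AA) + 1) * gP (s + 2) (s + 1)) * hd1'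

lemma SD (n S : ℕ) :
    FcP n (S + 2) = 2 * FcP n (S + 1) - FcP n S
      + (VhP n + UhP n) * cfP n (S + 1) - VhP n * cfP n S := by
  rw [FcP, FcP, FcP, Finset.sum_range_succ, Finset.sum_range_succ, Finset.sum_range_succ]
  push_cast
  have comb : (∑ t ∈ range S, cfP n t * (VhP n + ((S : AA) + 2 - (t : AA)) * UhP n))
      + (∑ t ∈ range S, cfP n t * (VhP n + ((S : AA) - (t : AA)) * UhP n))
      = 2 * ∑ t ∈ range S, cfP n t * (VhP n + ((S : AA) + 1 - (t : AA)) * UhP n) := by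
    rw [Finset.mul_sum, ← Finset.sum_add_distrib]
    apply Finset.sum_congr rfl
    intro t ht
    ring
  linear_combination comb

lemma cfP0 (n : ℕ) : cfP n 0 = 1 := by
  simp [cfP, gP, dP]

lemma B1 (n : ℕ) : ∀ s, s < n → FcP n s = ((s : AA) * ((n : AA) - (s : AA))) * cfP n s := by
  intro s
  induction s using Nat.strong_induction_on with
  | _ s IH =>
    match s with
    | 0 => intro _; simp [FcP]
    | 1 =>
      intro h1
      apply mul_left_cancel₀ four_ne
      rw [FcP, Finset.sum_range_one, cfP0]
      have hg0 := hg n 0 h1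
      push_cast at hg0
      have hg0' : ((n : AA) - 1) * gP n 1 = -(X 0 * X 1) := by
        have e : gP n 0 = 1 := rfl
        rw [e, mul_one] at hg0
        linear_combination hg0
      have hd1' := hd1 n
      rw [sigP] at hd1'
      have hcf : cfP n 1 = dP n 1 + gP n 1 := by
        rw [cfP, Finset.sum_range_succ, Finset.sum_range_one]
        have e : gP n 0 = 1 := rfl
        rw [Nat.sub_self, e, dP0, one_mul, mul_one]
      rw [hcf]
      have hv := hV4 n
      have hu := hU4 n
      rw [V4] at hv
      rw [U4, sigP] at hu
      push_cast
      linear_combination hv + hu - (2 * ((n : AA) - 1)) * hd1' - 4 * hg0'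
    | (s + 2) =>
      intro h2
      have ih1 := IH (s + 1) (by omega) (by omega)
      have ih0 := IH s (by omega) (by omega)
      have sd := SD n s
      have t1 := T1 n s h2
      apply mul_left_cancel₀ four_ne
      have hv := hV4 n
      have hu := hU4 n
      rw [V4] at hv
      rw [U4, sigP] at hu
      rw [P4, Q4, V4, U4, sigP] at t1
      push_cast at ih1 ih0 ⊢
      linear_combination 4 * sd + 8 * ih1 - 4 * ih0 + (cfP n (s + 1)) * hv
        + (cfP n (s + 1)) * hu - (cfP n s) * hv - t1

lemma B2 (s : ℕ) :
    FcP (s + 2) (s + 2) = -((X 0 + ((s : AA) + 1)) * (X 1 + ((s : AA) + 1))) * gP (s + 2) (s + 1) := by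
  apply mul_left_cancel₀ four_ne
  have sd := SD (s + 2) s
  have b1 := B1 (s + 2) (s + 1) (by omega)
  have b0 := B1 (s + 2) s (by omega)
  have t2 := T2 s
  rw [P4, Q4, V4, U4, sigP] at t2
  have hv := hV4 (s + 2)
  have hu := hU4 (s + 2)
  rw [V4] at hv
  rw [U4, sigP] at hu
  push_cast at *
  linear_combination 4 * sd + 8 * b1 - 4 * b0 + (cfP (s + 2) (s + 1)) * hv
    + (cfP (s + 2) (s + 1)) * hu - (cfP (s + 2) s) * hv + t2

lemma gP_closed (n m : ℕ) :
    gP n m = C ((-1 : ℚ) ^ m * (∏ j ∈ range m, (((j : ℚ) + 1) * ((n : ℚ) - (j : ℚ) - 1)))⁻¹) *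
      ∏ j ∈ range m, ((X 0 + (j : AA)) * (X 1 + (j : AA))) := by
  induction m with
  | zero => simp [gP]
  | succ m ih =>
    have hq : (-1 : ℚ) ^ (m + 1) *
        (∏ j ∈ range (m + 1), (((j : ℚ) + 1) * ((n : ℚ) - (j : ℚ) - 1)))⁻¹
        = ((((m : ℚ) + 1) * (((m : ℚ) + 1) - (n : ℚ)))⁻¹) *
          ((-1 : ℚ) ^ m * (∏ j ∈ range m, (((j : ℚ) + 1) * ((n : ℚ) - (j : ℚ) - 1)))⁻¹) := by
      rw [prod_range_succ, pow_succ, mul_inv]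
      have e : (((m : ℚ) + 1) * ((n : ℚ) - (m : ℚ) - 1))⁻¹ =
          -((((m : ℚ) + 1) * (((m : ℚ) + 1) - (n : ℚ)))⁻¹) := by
        rw [show (((m : ℚ) + 1) * ((n : ℚ) - (m : ℚ) - 1)) =
          -(((m : ℚ) + 1) * (((m : ℚ) + 1) - (n : ℚ))) by ring, inv_neg]
      rw [e]
      ring
    rw [gP, ih, hq, prod_range_succ]
    simp only [map_mul]
    ring


/- list-composition finsets -/
def cF : ℕ → Finset (List ℕ)
  | 0 => {[]}
  | (m + 1) => (Finset.range (m + 1)).attach.biUnion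
      (fun t => (cF t.1).image (fun l => l ++ [m + 1 - t.1]))
decreasing_by exact Finset.mem_range.mp t.2

lemma mem_cF : ∀ m (l : List ℕ), l ∈ cF m ↔ (l.sum = m ∧ ∀ x ∈ l, 0 < x) := by
  intro m
  induction m using Nat.strong_induction_on with
  | _ m IH =>
    match m with
    | 0 =>
      intro l
      rw [cF]
      simp only [Finset.mem_singleton]
      constructor
      · rintro rfl; simp
      · rintro ⟨hs, hp⟩
        cases l with
        | nil => rfl
        | cons a l =>
          exfalso
          have := hp a (by simp)
          simp at hs
          omega
    | (m + 1) =>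
      intro l
      rw [cF]
      simp only [Finset.mem_biUnion, Finset.mem_attach, Finset.mem_image, true_and,
        Subtype.exists]
      constructor
      · rintro ⟨t, ht, l', hl', rfl⟩
        have ht' : t < m + 1 := Finset.mem_range.mp ht
        obtain ⟨hs', hp'⟩ := (IH t ht' l').mp hl'
        refine ⟨by simp [hs']; omega, ?_⟩
        intro x hx
        rcases List.mem_append.mp hx with h | h
        · exact hp' x h
        · simp at h; omega
      · rintro ⟨hs, hp⟩
        have hne : l ≠ [] := by
          rintro rfl; simp at hs
        set b := l.getLast hne with hb
        have hbl : l.dropLast ++ [b] = l := List.dropLast_append_getLast hne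
        have hbpos : 0 < b := hp b (List.getLast_mem hne)
        have hsum : l.dropLast.sum + b = m + 1 := by
          rw [← hs, ← hbl]; simp
        refine ⟨l.dropLast.sum, Finset.mem_range.mpr (by omega), l.dropLast, ?_, ?_⟩
        · apply (IH l.dropLast.sum (by omega) l.dropLast).mpr
          refine ⟨rfl, ?_⟩
          intro x hx
          exact hp x (List.dropLast_subset l hx)
        · rw [show m + 1 - l.dropLast.sum = b by omega, hbl]

lemma sum_cF (m : ℕ) (φ : List ℕ → AA) :
    ∑ l ∈ cF (m + 1), φ l = ∑ t ∈ range (m + 1), ∑ l ∈ cF t, φ (l ++ [m + 1 - t]) := by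
  rw [cF]
  rw [Finset.sum_biUnion]
  · rw [← Finset.sum_attach (range (m + 1))
      (fun t => ∑ l ∈ cF t, φ (l ++ [m + 1 - t]))]
    apply Finset.sum_congr rfl
    intro t _
    rw [Finset.sum_image]
    intro x _ y _ hxy
    exact (List.append_inj' hxy rfl).1
  · intro t _ t' _ htt'
    apply Finset.disjoint_left.mpr
    rintro x hx hx'
    obtain ⟨l1, hl1, rfl⟩ := Finset.mem_image.mp hx
    obtain ⟨l2, hl2, heq⟩ := Finset.mem_image.mp hx'
    have := (List.append_inj' heq.symm rfl).2
    have e1 : t.1 < m + 1 := Finset.mem_range.mp t.2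
    have e2 : t'.1 < m + 1 := Finset.mem_range.mp t'.2
    apply htt'
    have : m + 1 - t.1 = m + 1 - t'.1 := by
      simpa using this
    exact Subtype.ext (by omega)

/- esymm facts -/
lemma esymm_zero' (s : Multiset ℚ) : s.esymm 0 = 1 := by simp [Multiset.esymm]

lemma esymm_cons (a : ℚ) (s : Multiset ℚ) (k : ℕ) :
    (a ::ₘ s).esymm (k + 1) = s.esymm (k + 1) + a * s.esymm k := by
  rw [Multiset.esymm, Multiset.powersetCard_cons, Multiset.map_add, Multiset.sum_add,
    Multiset.map_map]
  congr 1
  rw [Multiset.esymm]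
  rw [show ((Multiset.prod ∘ Multiset.cons a) : Multiset ℚ → ℚ)
      = (fun t => a * t.prod) from funext (fun t => Multiset.prod_cons a t)]
  rw [← Multiset.sum_map_mul_left]

lemma esymm_big (s : Multiset ℚ) (k : ℕ) (h : Multiset.card s < k) : s.esymm k = 0 := by
  simp [Multiset.esymm, Multiset.powersetCard_eq_empty _ h]

lemma A1 (u v : AA) (l : List ℚ) :
    (l.map (fun a => v + C a * u)).prod
      = ∑ k ∈ range (l.length + 1), C ((l : Multiset ℚ).esymm k) * u ^ k * v ^ (l.length - k) := by
  induction l with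
  | nil => simp [Multiset.esymm]
  | cons a l ih =>
    rw [List.map_cons, List.prod_cons, ih]
    have key : ∑ k ∈ range (l.length + 1 + 1),
        C (((a :: l : List ℚ) : Multiset ℚ).esymm k) * u ^ k * v ^ (l.length + 1 - k)
        = (v + C a * u) *
          ∑ k ∈ range (l.length + 1), C ((l : Multiset ℚ).esymm k) * u ^ k * v ^ (l.length - k) := by
      rw [Finset.sum_range_succ'
        (fun k => C (((a :: l : List ℚ) : Multiset ℚ).esymm k) * u ^ k * v ^ (l.length + 1 - k))]
      simp only [← Multiset.cons_coe, esymm_cons, esymm_zero', Nat.succ_sub_succ, map_add,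
        map_mul, pow_zero, mul_one, map_one, one_mul, Nat.sub_zero]
      have hsplit : ∑ x ∈ range (l.length + 1),
          (C ((↑l : Multiset ℚ).esymm (x + 1)) + C a * C ((↑l : Multiset ℚ).esymm x))
            * u ^ (x + 1) * v ^ (l.length - x)
          = (∑ x ∈ range (l.length + 1),
              C ((↑l : Multiset ℚ).esymm (x + 1)) * u ^ (x + 1) * v ^ (l.length - x))
            + ∑ x ∈ range (l.length + 1),
              C a * C ((↑l : Multiset ℚ).esymm x) * u ^ (x + 1) * v ^ (l.length - x) := by
        rw [← Finset.sum_add_distrib]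
        apply Finset.sum_congr rfl
        intros
        ring
      rw [hsplit]
      have hS1 : ∑ x ∈ range (l.length + 1),
          C ((↑l : Multiset ℚ).esymm (x + 1)) * u ^ (x + 1) * v ^ (l.length - x)
          = ∑ x ∈ range l.length,
            C ((↑l : Multiset ℚ).esymm (x + 1)) * u ^ (x + 1) * v ^ (l.length - x) := by
        rw [Finset.sum_range_succ, esymm_big _ _ (by simp), map_zero]
        simp
      have hv : v * ∑ k ∈ range (l.length + 1), C ((↑l : Multiset ℚ).esymm k) * u ^ k * v ^ (l.length - k)
          = (∑ x ∈ range l.length,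
              C ((↑l : Multiset ℚ).esymm (x + 1)) * u ^ (x + 1) * v ^ (l.length - x)) + v ^ (l.length + 1) := by
        rw [Finset.mul_sum, Finset.sum_range_succ'
          (fun k => v * (C ((↑l : Multiset ℚ).esymm k) * u ^ k * v ^ (l.length - k)))]
        congr 1
        · apply Finset.sum_congr rfl
          intro x hx
          have hxl : x < l.length := Finset.mem_range.mp hx
          rw [show l.length - x = (l.length - (x + 1)) + 1 by omega, pow_succ]
          ring
        · rw [esymm_zero', map_one, Nat.sub_zero, pow_succ]
          ring
      have hu : C a * u * ∑ k ∈ range (l.length + 1), C ((↑l : Multiset ℚ).esymm k) * u ^ k * v ^ (l.length - k)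
          = ∑ x ∈ range (l.length + 1),
            C a * C ((↑l : Multiset ℚ).esymm x) * u ^ (x + 1) * v ^ (l.length - x) := by
        rw [Finset.mul_sum]
        apply Finset.sum_congr rfl
        intros
        rw [pow_succ]
        ring
      rw [hS1, add_mul, hv, hu]
      ring
    simp only [List.length_cons]
    exact key.symm

/- Lval/Rval lemmas -/
lemma Lval_concat (l : List ℕ) (b : ℕ) :
    Lval (l ++ [b]) = Lval l * ((l.sum + b : ℕ) : ℚ) := by
  rw [Lval, Lval]
  have hlen : (l ++ [b]).length = l.length + 1 := by simp
  rw [hlen, Finset.prod_range_succ]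
  congr 1
  · apply Finset.prod_congr rfl
    intro j hj
    have : j + 1 ≤ l.length := Finset.mem_range.mp hj
    rw [List.take_append_of_le_length this]
  · rw [show l.length + 1 = (l ++ [b]).length from hlen.symm, List.take_length]
    simp

lemma take_reverse_sum (l : List ℕ) (j : ℕ) (hj : j ≤ l.length) :
    (l.reverse.take j).sum + (l.take (l.length - j)).sum = l.sum := by
  have h1 : l.reverse.take j = (l.drop (l.length - j)).reverse := by
    rw [List.reverse_drop]
    congr 1
    omega
  rw [h1, List.sum_reverse]
  rw [add_comm]
  exact List.sum_take_add_sum_drop l (l.length - j)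

lemma Rval_concat (l : List ℕ) (b : ℕ) (n : ℕ) (hsum : l.sum + b = n) :
    Rval (l ++ [b]) = ∏ j ∈ range (l.length + 1), (((n - (l.take j).sum : ℕ)) : ℚ) := by
  rw [Rval, List.reverse_append, List.reverse_singleton, List.singleton_append, Lval]
  have hlen : (b :: l.reverse).length = l.length + 1 := by simp
  rw [hlen]
  have e1 : ∀ j ∈ range (l.length + 1),
      ((((b :: l.reverse).take (j + 1)).sum : ℕ) : ℚ)
        = (((n - (l.take (l.length - j)).sum : ℕ)) : ℚ) := by
    intro j hj
    have hj' : j ≤ l.length := by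
      have := Finset.mem_range.mp hj; omega
    rw [List.take_succ_cons, List.sum_cons]
    have := take_reverse_sum l j hj'
    congr 1
    have hle : (l.take (l.length - j)).sum ≤ l.sum := by
      have := List.sum_take_add_sum_drop l (l.length - j); omega
    omega
  rw [Finset.prod_congr rfl e1]
  have := Finset.prod_range_reflect
    (fun j => (((n - (l.take j).sum : ℕ)) : ℚ)) (l.length + 1)
  rw [← this]
  simp only [Nat.add_sub_cancel]

/- the internal weight -/
def WLq (n : ℕ) (l : List ℕ) : ℚ :=
  ∏ j ∈ range l.length,
    ((((l.take (j + 1)).sum : ℕ) : ℚ) * ((n : ℚ) - (((l.take (j + 1)).sum : ℕ) : ℚ)))⁻¹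

lemma LR_inv (l : List ℕ) (b : ℕ) (n : ℕ) (hsum : l.sum + b = n) :
    (Lval (l ++ [b]) * Rval (l ++ [b]))⁻¹ = (n : ℚ)⁻¹ * (n : ℚ)⁻¹ * WLq n l := by
  rw [Lval_concat, Rval_concat l b n hsum, hsum]
  rw [Finset.prod_range_succ']
  have e0 : ((n - (l.take 0).sum : ℕ) : ℚ) = (n : ℚ) := by simp
  rw [e0]
  have e1 : ∀ j ∈ range l.length,
      ((n - (l.take (j + 1)).sum : ℕ) : ℚ) = (n : ℚ) - (((l.take (j + 1)).sum : ℕ) : ℚ) := by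
    intro j hj
    have hle : (l.take (j + 1)).sum ≤ l.sum := by
      have := List.sum_take_add_sum_drop l (j + 1); omega
    push_cast [Nat.cast_sub (by omega : (l.take (j+1)).sum ≤ n)]
    ring
  rw [Finset.prod_congr rfl e1, WLq, Lval]
  simp only [mul_inv, ← Finset.prod_inv_distrib, Finset.prod_mul_distrib]
  ring


/- weight and A3 -/
def wP (n : ℕ) (l : List ℕ) : AA :=
  (l.map (fun a : ℕ => VhP n + C ((a : ℚ)) * UhP n)).prod * C (WLq n l)

lemma wP_concat (n : ℕ) (l : List ℕ) (b : ℕ) :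
    wP n (l ++ [b]) = wP n l * (VhP n + C ((b : ℚ)) * UhP n) *
      C ((((l.sum + b : ℕ) : ℚ) * ((n : ℚ) - ((l.sum + b : ℕ) : ℚ)))⁻¹) := by
  rw [wP, wP, List.map_append, List.prod_append, List.map_singleton, List.prod_singleton]
  have hW : WLq n (l ++ [b])
      = WLq n l * ((((l.sum + b : ℕ) : ℚ) * ((n : ℚ) - ((l.sum + b : ℕ) : ℚ)))⁻¹) := by
    rw [WLq, WLq]
    have hlen : (l ++ [b]).length = l.length + 1 := by simp
    rw [hlen, Finset.prod_range_succ]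
    congr 1
    · apply Finset.prod_congr rfl
      intro j hj
      have : j + 1 ≤ l.length := Finset.mem_range.mp hj
      rw [List.take_append_of_le_length this]
    · rw [show l.length + 1 = (l ++ [b]).length from hlen.symm, List.take_length]
      simp
  rw [hW, map_mul]
  ring

lemma A3 (n : ℕ) : ∀ m, m < n → ∑ l ∈ cF m, wP n l = cfP n m := by
  intro m
  induction m using Nat.strong_induction_on with
  | _ m IH =>
    match m with
    | 0 =>
      intro _
      rw [show cF 0 = {[]} by rw [cF], Finset.sum_singleton, cfP0]
      simp [wP, WLq]
    | (m + 1) =>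
      intro h
      rw [sum_cF]
      have step : ∀ t ∈ range (m + 1), ∑ l ∈ cF t, wP n (l ++ [m + 1 - t])
          = (cfP n t * (VhP n + (((m + 1 : ℕ) : AA) - (t : AA)) * UhP n)) *
            C (((((m + 1 : ℕ)) : ℚ) * ((n : ℚ) - (((m + 1 : ℕ)) : ℚ)))⁻¹) := by
        intro t ht
        have ht' : t < m + 1 := Finset.mem_range.mp ht
        have e1 : ∀ l ∈ cF t, wP n (l ++ [m + 1 - t])
            = wP n l * (VhP n + (((m + 1 : ℕ) : AA) - (t : AA)) * UhP n) *
              C (((((m + 1 : ℕ)) : ℚ) * ((n : ℚ) - (((m + 1 : ℕ)) : ℚ)))⁻¹) := by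
          intro l hl
          obtain ⟨hs, _⟩ := (mem_cF t l).mp hl
          have e2 := wP_concat n l (m + 1 - t)
          rw [hs, show t + (m + 1 - t) = m + 1 by omega] at e2
          have c1 : C (((m + 1 - t : ℕ) : ℚ)) = ((m + 1 : ℕ) : AA) - (t : AA) := by
            rw [← natCast_C, Nat.cast_sub (by omega : t ≤ m + 1)]
          rw [e2, c1]
        rw [Finset.sum_congr rfl e1, ← Finset.sum_mul, ← Finset.sum_mul,
          IH t ht' (by omega)]
      rw [Finset.sum_congr rfl step, ← Finset.sum_mul]
      have hF : ∑ t ∈ range (m + 1),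
          cfP n t * (VhP n + (((m + 1 : ℕ) : AA) - (t : AA)) * UhP n) = FcP n (m + 1) := rfl
      rw [hF, B1 n (m + 1) h]
      have hC : ((((m + 1 : ℕ)) : AA) * ((n : AA) - (((m + 1 : ℕ)) : AA)))
          = C ((((m + 1 : ℕ)) : ℚ) * ((n : ℚ) - (((m + 1 : ℕ)) : ℚ))) := by
        simp only [map_mul, map_sub, map_natCast]
      rw [mul_assoc, mul_comm (cfP n (m + 1)), ← mul_assoc, hC, ← C_mul]
      rw [mul_inv_cancel₀, map_one, one_mul]
      apply mul_ne_zero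
      · positivity
      · have : ((m + 1 : ℕ) : ℚ) < (n : ℚ) := by exact_mod_cast h
        intro hcon
        nlinarith

lemma comp_sum (n : ℕ) (φ : List ℕ → AA) :
    ∑ c : Composition n, φ c.blocks = ∑ l ∈ cF n, φ l := by
  apply Finset.sum_bij (i := fun (c : Composition n) _ => c.blocks)
  · intro c _
    exact (mem_cF n c.blocks).mpr ⟨c.blocks_sum, fun x hx => c.blocks_pos hx⟩
  · intro c _ c' _ hcc
    exact Composition.ext hcc
  · intro l hl
    obtain ⟨hs, hp⟩ := (mem_cF n l).mp hl
    exact ⟨⟨l, fun hx => hp _ hx, hs⟩, Finset.mem_univ _, rfl⟩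
  · intro c _
    rfl

lemma comp_length_mem (n : ℕ) (hn : 1 ≤ n) (c : Composition n) :
    c.length ∈ Finset.Icc 1 n := by
  rw [Finset.mem_Icc]
  constructor
  · rcases Nat.eq_zero_or_pos c.length with h0 | h1
    · exfalso
      have hb : c.blocks = [] := List.length_eq_zero_iff.mp (by
        rw [Composition.blocks_length]; exact h0)
      have hc := c.blocks_sum
      rw [hb] at hc
      simp at hc
      omega
    · exact h1
  · exact c.length_le

lemma step1 (n : ℕ) (hn : 1 ≤ n) :
    (aeval ![UhP n, VhP n]) (Pgen n)
      = ∑ c : Composition n, C ((Lval c.blocks * Rval c.blocks)⁻¹) *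
          (c.blocks.map (fun b : ℕ => VhP n + C ((b : ℚ)) * UhP n)).prod := by
  rw [Pgen, map_sum]
  have e1 : ∀ l ∈ Finset.Icc 1 n,
      (aeval ![UhP n, VhP n]) (∑ k ∈ range (l + 1), C (Sval k l n) * X 0 ^ k * X 1 ^ (l - k))
      = ∑ c ∈ Finset.univ.filter (fun c : Composition n => c.length = l),
          C ((Lval c.blocks * Rval c.blocks)⁻¹) *
          (c.blocks.map (fun b : ℕ => VhP n + C ((b : ℚ)) * UhP n)).prod := by
    intro l _
    rw [map_sum]
    have e2 : ∀ k ∈ range (l + 1),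
        (aeval ![UhP n, VhP n]) (C (Sval k l n) * X 0 ^ k * X 1 ^ (l - k))
        = ∑ c ∈ Finset.univ.filter (fun c : Composition n => c.length = l),
            C ((Lval c.blocks * Rval c.blocks)⁻¹) *
            (C (((c.blocks.map (fun i : ℕ => (i : ℚ)) : Multiset ℚ)).esymm k)
              * UhP n ^ k * VhP n ^ (l - k)) := by
      intro k _
      rw [map_mul, map_mul, map_pow, map_pow, aeval_C, aeval_X, aeval_X]
      rw [show (![UhP n, VhP n] : Fin 2 → AA) 0 = UhP n from rfl,
        show (![UhP n, VhP n] : Fin 2 → AA) 1 = VhP n from rfl]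
      rw [MvPolynomial.algebraMap_eq, Sval, map_sum, Finset.sum_mul, Finset.sum_mul]
      apply Finset.sum_congr rfl
      intro c _
      rw [div_eq_mul_inv, map_mul]
      ring
    rw [Finset.sum_congr rfl e2, Finset.sum_comm]
    apply Finset.sum_congr rfl
    intro c hc
    have hlen : c.length = l := (Finset.mem_filter.mp hc).2
    subst hlen
    rw [← Finset.mul_sum]
    congr 1
    have ha := A1 (UhP n) (VhP n) (c.blocks.map (fun i : ℕ => (i : ℚ)))
    rw [List.length_map, Composition.blocks_length] at ha
    rw [← ha, List.map_map]
    rfl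
  rw [Finset.sum_congr rfl e1]
  exact Finset.sum_fiberwise_of_maps_to (fun c _ => comp_length_mem n hn c) _

lemma step5 (m : ℕ) :
    ∑ l ∈ cF (m + 1), (C ((Lval l * Rval l)⁻¹) *
        (l.map (fun b : ℕ => VhP (m + 1) + C ((b : ℚ)) * UhP (m + 1))).prod)
      = C ((((m + 1 : ℕ)) : ℚ)⁻¹ * (((m + 1 : ℕ)) : ℚ)⁻¹) * FcP (m + 1) (m + 1) := by
  rw [sum_cF]
  have e : ∀ t ∈ range (m + 1),
      ∑ l ∈ cF t, (C ((Lval (l ++ [m + 1 - t]) * Rval (l ++ [m + 1 - t]))⁻¹) *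
        ((l ++ [m + 1 - t]).map (fun b : ℕ => VhP (m + 1) + C ((b : ℚ)) * UhP (m + 1))).prod)
      = C ((((m + 1 : ℕ)) : ℚ)⁻¹ * (((m + 1 : ℕ)) : ℚ)⁻¹) *
          (cfP (m + 1) t * (VhP (m + 1) + (((m + 1 : ℕ) : AA) - (t : AA)) * UhP (m + 1))) := by
    intro t ht
    have ht' : t < m + 1 := Finset.mem_range.mp ht
    have e1 : ∀ l ∈ cF t,
        C ((Lval (l ++ [m + 1 - t]) * Rval (l ++ [m + 1 - t]))⁻¹) *
          ((l ++ [m + 1 - t]).map (fun b : ℕ => VhP (m + 1) + C ((b : ℚ)) * UhP (m + 1))).prod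
        = C ((((m + 1 : ℕ)) : ℚ)⁻¹ * (((m + 1 : ℕ)) : ℚ)⁻¹) *
            (wP (m + 1) l * (VhP (m + 1) + (((m + 1 : ℕ) : AA) - (t : AA)) * UhP (m + 1))) := by
      intro l hl
      obtain ⟨hs, _⟩ := (mem_cF t l).mp hl
      have hsum : l.sum + (m + 1 - t) = m + 1 := by omega
      rw [LR_inv l (m + 1 - t) (m + 1) hsum]
      rw [List.map_append, List.prod_append, List.map_singleton, List.prod_singleton]
      have c1 : C (((m + 1 - t : ℕ) : ℚ)) = ((m + 1 : ℕ) : AA) - (t : AA) := by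
        rw [← natCast_C, Nat.cast_sub (by omega : t ≤ m + 1)]
      rw [map_mul, map_mul, ← c1, wP]
      ring
    rw [Finset.sum_congr rfl e1, ← Finset.mul_sum, ← Finset.sum_mul, A3 (m + 1) t ht']
  rw [Finset.sum_congr rfl e, ← Finset.mul_sum]
  rfl

lemma hfact (s : ℕ) :
    (∏ j ∈ range (s + 1), (((j : ℚ) + 1) * (((s + 2 : ℕ) : ℚ) - (j : ℚ) - 1)))
      = (((s + 1).factorial : ℚ)) ^ 2 := by
  have h1 : ∀ j ∈ range (s + 1),
      ((j : ℚ) + 1) * (((s + 2 : ℕ) : ℚ) - (j : ℚ) - 1) = (((j + 1) * (s + 1 - j) : ℕ) : ℚ) := by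
    intro j hj
    have hj' : j < s + 1 := Finset.mem_range.mp hj
    push_cast [Nat.cast_sub (by omega : j ≤ s + 1)]
    ring
  rw [Finset.prod_congr rfl h1, ← Nat.cast_prod]
  have h2 : ∏ j ∈ range (s + 1), ((j + 1) * (s + 1 - j)) =
      (∏ j ∈ range (s + 1), (j + 1)) * ∏ j ∈ range (s + 1), (s + 1 - j) := by
    rw [Finset.prod_mul_distrib]
  have h3 : ∏ j ∈ range (s + 1), (s + 1 - j) = ∏ j ∈ range (s + 1), (j + 1) := by
    have h4 := Finset.prod_range_reflect (fun j => j + 1) (s + 1)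
    rw [← h4]
    apply Finset.prod_congr rfl
    intro j hj
    have := Finset.mem_range.mp hj
    omega
  rw [h2, h3, Finset.prod_range_add_one_eq_factorial]
  push_cast
  ring

/-- With `α = X 0`, `β = X 1` in `ℚ[α,β]`, `û_n = ¼(α+β+n)(2-α-β-n)` and
`v̂_n = ¼(α-β-n)(α-β+n)`, one has `P_n(û_n, v̂_n) = (-1)ⁿ (α)_n (β)_n / (n!)²`. -/
theorem Pgen_eval_uhat_vhat (n : ℕ) (hn : 1 ≤ n)
    (α β uh vh : MvPolynomial (Fin 2) ℚ) (hα : α = X 0) (hβ : β = X 1)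
    (huh : uh = C (1 / 4 : ℚ) * (α + β + (n : MvPolynomial (Fin 2) ℚ)) *
      (2 - α - β - (n : MvPolynomial (Fin 2) ℚ)))
    (hvh : vh = C (1 / 4 : ℚ) * (α - β - (n : MvPolynomial (Fin 2) ℚ)) *
      (α - β + (n : MvPolynomial (Fin 2) ℚ))) :
    MvPolynomial.aeval ![uh, vh] (Pgen n) =
      C ((-1) ^ n / ((n.factorial : ℚ)) ^ 2) *
        (∏ j ∈ Finset.range n, (α + (j : MvPolynomial (Fin 2) ℚ))) *
        (∏ j ∈ Finset.range n, (β + (j : MvPolynomial (Fin 2) ℚ))) := by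
  subst hα hβ huh hvh
  have hu : C (1 / 4 : ℚ) * (X 0 + X 1 + (n : AA)) * (2 - X 0 - X 1 - (n : AA)) = UhP n := rfl
  have hv : C (1 / 4 : ℚ) * (X 0 - X 1 - (n : AA)) * (X 0 - X 1 + (n : AA)) = VhP n := rfl
  rw [hu, hv, step1 n hn, comp_sum n (fun l => C ((Lval l * Rval l)⁻¹) *
    (l.map (fun b : ℕ => VhP n + C ((b : ℚ)) * UhP n)).prod)]
  obtain ⟨m, rfl⟩ : ∃ m, n = m + 1 := ⟨n - 1, by omega⟩
  rw [step5 m]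
  match m with
  | 0 =>
    simp only [Nat.zero_add, zero_add]
    rw [FcP, Finset.sum_range_one, cfP0, one_mul]
    have hVU : VhP 1 + UhP 1 = C (-1 : ℚ) * X 0 * X 1 := by
      apply mul_left_cancel₀ four_ne
      have hv4 := hV4 1
      have hu4 := hU4 1
      rw [V4] at hv4
      rw [U4, sigP] at hu4
      rw [map_neg, map_one]
      push_cast at *
      linear_combination hv4 + hu4
    simp only [Nat.cast_zero, Nat.cast_one, sub_zero, one_mul, Finset.prod_range_one]
    rw [hVU]
    norm_num
  | (s + 1) =>
    have b2 := B2 s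
    rw [show (s + 1 + 1 : ℕ) = s + 2 from rfl] at *
    rw [b2, gP_closed (s + 2) (s + 1)]
    have hprod : (∏ j ∈ range (s + 2), (X 0 + (j : AA))) * (∏ j ∈ range (s + 2), (X 1 + (j : AA)))
        = ((X 0 + ((s : AA) + 1)) * (X 1 + ((s : AA) + 1))) *
          ∏ j ∈ range (s + 1), ((X 0 + (j : AA)) * (X 1 + (j : AA))) := by
      rw [← Finset.prod_mul_distrib, Finset.prod_range_succ]
      push_cast
      ring
    have hfne : (((s + 1).factorial : ℚ)) ≠ 0 := by
      exact_mod_cast Nat.factorial_ne_zero (s + 1)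
    have hsne : ((s : ℚ) + 2) ≠ 0 := by positivity
    have hQ : ((((s + 2 : ℕ)) : ℚ)⁻¹ * (((s + 2 : ℕ)) : ℚ)⁻¹) *
        ((-1 : ℚ) ^ (s + 1) *
          (∏ j ∈ range (s + 1), (((j : ℚ) + 1) * (((s + 2 : ℕ) : ℚ) - (j : ℚ) - 1)))⁻¹)
        = -((-1 : ℚ) ^ (s + 2) / (((s + 2).factorial : ℚ)) ^ 2) := by
      rw [hfact s, Nat.factorial_succ (s + 1)]
      push_cast
      rw [pow_succ]
      field_simp
      ring
    have hC2 : (C ((((s + 2 : ℕ)) : ℚ)⁻¹ * (((s + 2 : ℕ)) : ℚ)⁻¹) *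
        C ((-1 : ℚ) ^ (s + 1) *
          (∏ j ∈ range (s + 1), (((j : ℚ) + 1) * (((s + 2 : ℕ) : ℚ) - (j : ℚ) - 1)))⁻¹) : AA)
        = - C ((-1 : ℚ) ^ (s + 2) / (((s + 2).factorial : ℚ)) ^ 2) := by
      rw [← C_mul, hQ, map_neg]
    linear_combination (-(((X 0 + ((s : AA) + 1)) * (X 1 + ((s : AA) + 1)))) *
        ∏ j ∈ range (s + 1), ((X 0 + (j : AA)) * (X 1 + (j : AA)))) * hC2
      - C ((-1 : ℚ) ^ (s + 2) / (((s + 2).factorial : ℚ)) ^ 2) * hprod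

end
end
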